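/- arXiv:1902.01423 — 2 statements merged into one kernel-verified Lean document; each statement's English description precedes it below -/
import Mathlib

section
/- Let Σ_N ≻ 0 be n×n, H an n×p matrix, H_F an n×m matrix, and for t > 0 define I(t) = Hᵀ (t · H_F H_Fᵀ + Σ_N)⁻¹ H. Then as t → ∞, I(t) converges to Hᵀ Σ_N⁻¹ H - Hᵀ Σ_N⁻¹ H_F (H_Fᵀ Σ_N⁻¹ H_F)⁺ H_Fᵀ Σ_N⁻¹ H, where ⁺ denotes Moore–Penrose pseudoinverse; in particular if H_F has full column rank the limit is Hᵀ Σ_N⁻¹ H - Hᵀ Σ_N⁻¹ H_F (H_Fᵀ Σ_N⁻¹ H_F)⁻¹ H_Fᵀ Σ_N⁻¹ H. -/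
/-!
Woodbury's identity rewrites `(t • HF HFᵀ + SN)⁻¹` as `G - G HF (t⁻¹ + M)⁻¹ HFᵀ G`, where
`G = SN⁻¹` and `M = HFᵀ G HF ⪰ 0`, so it suffices that `HF (ε + M)⁻¹ HFᵀ → HF P HFᵀ` as `ε → 0⁺`
for every `P` with `M P M = M`. Since `ker M = ker HF`, such a `P` satisfies `HF P M = HF`, hence
`HF (ε + M)⁻¹ HFᵀ = HF P (M (ε + M)⁻¹ M) P HFᵀ`; and `M (ε + M)⁻¹ M = M - ε + ε² (ε + M)⁻¹ → M`
because the entries of `ε (ε + M)⁻¹` stay bounded by `1` when `M ⪰ 0`.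
-/

open Matrix Filter Topology

def IsMoorePenrose {a b : ℕ} (A : Matrix (Fin a) (Fin b) ℝ) (P : Matrix (Fin b) (Fin a) ℝ) : Prop :=
  A * P * A = A ∧ P * A * P = P ∧ (A * P)ᵀ = A * P ∧ (P * A)ᵀ = P * A

namespace Matrix

variable {n m : Type*}

lemma mulVec_injective_of_rank_eq_card [Fintype m] {K : Type*} [Field K] {A : Matrix n m K}
    (h : A.rank = Fintype.card m) : Function.Injective A.mulVec := by
  rw [mulVec_injective_iff, linearIndependent_iff_card_eq_finrank_span, ← h,
    rank_eq_finrank_span_cols]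
  rfl

lemma inv_smul_mul_add_eq_sub [Fintype n] [DecidableEq n] [Fintype m] [DecidableEq m]
    {K : Type*} [Field K] {S : Matrix n n K} (hS : IsUnit S) (U : Matrix n m K)
    (V : Matrix m n K) {t : K} (ht : t ≠ 0) (h : IsUnit (t⁻¹ • 1 + V * S⁻¹ * U)) :
    (t • (U * V) + S)⁻¹ = S⁻¹ - S⁻¹ * U * (t⁻¹ • 1 + V * S⁻¹ * U)⁻¹ * V * S⁻¹ := by
  have hC : IsUnit (t • 1 : Matrix m m K) := isUnit_one.smul (Units.mk0 t ht)
  have hCinv : (t • 1 : Matrix m m K)⁻¹ = t⁻¹ • 1 :=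
    inv_eq_left_inv (by rw [smul_mul_smul_comm, inv_mul_cancel₀ ht, one_mul, one_smul])
  rw [← hCinv] at h ⊢
  rw [← add_mul_mul_inv_eq_sub S U _ V hS hC h, add_comm, Matrix.mul_smul, Matrix.mul_one,
    Matrix.smul_mul]

lemma mul_inv_smul_one_add_mul [Fintype m] [DecidableEq m] {K : Type*} [Field K]
    {M : Matrix m m K} {ε : K} (h : IsUnit (ε • 1 + M)) :
    M * (ε • 1 + M)⁻¹ * M = M - ε • 1 + ε ^ 2 • (ε • 1 + M)⁻¹ := by
  have hdet := (isUnit_iff_isUnit_det _).mp h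
  have hright : M * (ε • 1 + M)⁻¹ = 1 - ε • (ε • 1 + M)⁻¹ := by
    have hinv := mul_nonsing_inv _ hdet
    rwa [add_mul, smul_mul, one_mul, ← eq_sub_iff_add_eq'] at hinv
  have hleft : (ε • 1 + M)⁻¹ * M = 1 - ε • (ε • 1 + M)⁻¹ := by
    have hinv := nonsing_inv_mul _ hdet
    rwa [mul_add, Matrix.mul_smul, mul_one, ← eq_sub_iff_add_eq'] at hinv
  rw [hright, sub_mul, one_mul, smul_mul, hleft]
  module

namespace PosSemidef

lemma transpose_mul_mul_same [Fintype n] [Fintype m] {G : Matrix n n ℝ} (hG : G.PosSemidef)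
    (A : Matrix n m ℝ) : (Aᵀ * G * A).PosSemidef := by
  simpa [conjTranspose_eq_transpose_of_trivial] using hG.conjTranspose_mul_mul_same A

lemma sq_mul_dotProduct_self_le [Fintype m] [DecidableEq m] {M : Matrix m m ℝ}
    (hM : M.PosSemidef) {ε : ℝ} (hε : 0 ≤ ε) (y : m → ℝ) :
    ε ^ 2 * (y ⬝ᵥ y) ≤ ((ε • 1 + M) *ᵥ y) ⬝ᵥ ((ε • 1 + M) *ᵥ y) := by
  have hyMy : 0 ≤ y ⬝ᵥ (M *ᵥ y) := by simpa using hM.dotProduct_mulVec_nonneg y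
  have hMyMy : 0 ≤ (M *ᵥ y) ⬝ᵥ (M *ᵥ y) := by
    simpa using dotProduct_star_self_nonneg (M *ᵥ y)
  have hexpand : ((ε • 1 + M) *ᵥ y) ⬝ᵥ ((ε • 1 + M) *ᵥ y)
      = ε ^ 2 * (y ⬝ᵥ y) + 2 * ε * (y ⬝ᵥ (M *ᵥ y)) + (M *ᵥ y) ⬝ᵥ (M *ᵥ y) := by
    simp only [add_mulVec, smul_mulVec, one_mulVec, dotProduct_add, add_dotProduct,
      smul_dotProduct, dotProduct_smul, dotProduct_comm (M *ᵥ y) y, smul_eq_mul]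
    ring
  rw [hexpand]
  nlinarith

lemma abs_smul_inv_smul_one_add_apply_le [Fintype m] [DecidableEq m] {M : Matrix m m ℝ}
    (hM : M.PosSemidef) {ε : ℝ} (hε : 0 < ε) (i j : m) : |(ε • (ε • 1 + M)⁻¹) i j| ≤ 1 := by
  have hA : IsUnit (ε • 1 + M) := ((PosDef.one.smul hε).add_posSemidef hM).isUnit
  set y := (ε • 1 + M)⁻¹ *ᵥ Pi.single j 1
  have hy : (ε • 1 + M) *ᵥ y = Pi.single j 1 := by
    rw [mulVec_mulVec, mul_nonsing_inv _ ((isUnit_iff_isUnit_det _).mp hA), one_mulVec]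
  have hentry : (ε • (ε • 1 + M)⁻¹) i j = ε * y i := by simp [y]
  have hcoord : y i ^ 2 ≤ y ⬝ᵥ y := by
    simpa [dotProduct, sq] using
      Finset.single_le_sum (fun k _ => mul_self_nonneg (y k)) (Finset.mem_univ i)
  have hsq : (ε * y i) ^ 2 ≤ 1 := by
    have hnorm := hM.sq_mul_dotProduct_self_le hε.le y
    rw [hy, dotProduct_single, Pi.single_eq_same, mul_one] at hnorm
    nlinarith [mul_le_mul_of_nonneg_left hcoord (sq_nonneg ε)]
  rw [hentry]
  exact abs_le_one_iff_mul_self_le_one.mpr (by nlinarith)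

lemma tendsto_sq_smul_inv_smul_one_add [Fintype m] [DecidableEq m] {M : Matrix m m ℝ}
    (hM : M.PosSemidef) :
    Tendsto (fun ε : ℝ => ε ^ 2 • (ε • 1 + M)⁻¹) (𝓝[>] 0) (𝓝 0) := by
  refine tendsto_pi_nhds.mpr fun i => tendsto_pi_nhds.mpr fun j => ?_
  refine squeeze_zero_norm' (a := id) ?_ (tendsto_nhdsWithin_of_tendsto_nhds tendsto_id)
  filter_upwards [self_mem_nhdsWithin] with ε (hε : 0 < ε)
  have hbound := hM.abs_smul_inv_smul_one_add_apply_le hε i j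
  rw [pow_two, ← smul_smul, smul_apply, smul_eq_mul, Real.norm_eq_abs, abs_mul,
    abs_of_pos hε]
  simpa using mul_le_mul_of_nonneg_left hbound hε.le

lemma tendsto_mul_inv_smul_one_add_mul [Fintype m] [DecidableEq m] {M : Matrix m m ℝ}
    (hM : M.PosSemidef) :
    Tendsto (fun ε : ℝ => M * (ε • 1 + M)⁻¹ * M) (𝓝[>] 0) (𝓝 M) := by
  have hlin : Tendsto (fun ε : ℝ => M - ε • (1 : Matrix m m ℝ)) (𝓝[>] 0) (𝓝 M) := by
    refine tendsto_nhdsWithin_of_tendsto_nhds ?_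
    have hcont : Continuous fun ε : ℝ => M - ε • (1 : Matrix m m ℝ) := by fun_prop
    simpa using hcont.tendsto 0
  have hsum := hlin.add hM.tendsto_sq_smul_inv_smul_one_add
  rw [add_zero] at hsum
  refine hsum.congr' ?_
  filter_upwards [self_mem_nhdsWithin] with ε (hε : 0 < ε)
  exact (mul_inv_smul_one_add_mul ((PosDef.one.smul hε).add_posSemidef hM).isUnit).symm

end PosSemidef

namespace PosDef

lemma mulVec_eq_zero_of_transpose_mul_mul_mulVec_eq_zero [Fintype n] [Fintype m]
    {G : Matrix n n ℝ} (hG : G.PosDef) {A : Matrix n m ℝ} {x : m → ℝ}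
    (hx : (Aᵀ * G * A) *ᵥ x = 0) : A *ᵥ x = 0 := by
  by_contra hAx
  have hquad : (A *ᵥ x) ⬝ᵥ G *ᵥ (A *ᵥ x) = x ⬝ᵥ (Aᵀ * G * A) *ᵥ x := by
    rw [← mulVec_mulVec, ← mulVec_mulVec, dotProduct_mulVec x Aᵀ, vecMul_transpose]
  have hpos := hG.dotProduct_mulVec_pos hAx
  rw [star_trivial, hquad, hx, dotProduct_zero] at hpos
  exact hpos.false

lemma mul_mul_transpose_mul_mul_eq_self [Fintype n] [Fintype m] {G : Matrix n n ℝ}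
    (hG : G.PosDef) (A : Matrix n m ℝ) {Q : Matrix m m ℝ}
    (hQ : Aᵀ * G * A * Q * (Aᵀ * G * A) = Aᵀ * G * A) :
    A * Q * (Aᵀ * G * A) = A := by
  refine ext_iff_mulVec.mpr fun v => ?_
  have hker : (Aᵀ * G * A) *ᵥ ((Q * (Aᵀ * G * A)) *ᵥ v - v) = 0 := by
    rw [mulVec_sub, mulVec_mulVec, ← Matrix.mul_assoc, hQ, sub_self]
  have hA := hG.mulVec_eq_zero_of_transpose_mul_mul_mulVec_eq_zero hker
  rwa [mulVec_sub, mulVec_mulVec, sub_eq_zero, ← Matrix.mul_assoc] at hA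

lemma tendsto_mul_inv_smul_one_add_mul_transpose [Fintype n] [Fintype m] [DecidableEq m]
    {G : Matrix n n ℝ} (hG : G.PosDef) (A : Matrix n m ℝ) {P : Matrix m m ℝ}
    (hP : Aᵀ * G * A * P * (Aᵀ * G * A) = Aᵀ * G * A) :
    Tendsto (fun ε : ℝ => A * (ε • 1 + Aᵀ * G * A)⁻¹ * Aᵀ) (𝓝[>] 0) (𝓝 (A * P * Aᵀ)) := by
  set M := Aᵀ * G * A
  have hM : M.PosSemidef := hG.posSemidef.transpose_mul_mul_same A
  have hMt : Mᵀ = M := by simpa [conjTranspose_eq_transpose_of_trivial] using hM.isHermitian.eq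
  have hleft : A * P * M = A := hG.mul_mul_transpose_mul_mul_eq_self A hP
  have hright : M * P * Aᵀ = Aᵀ := by
    have hPt : M * Pᵀ * M = M := by
      simpa only [transpose_mul, hMt, Matrix.mul_assoc] using congrArg (·ᵀ) hP
    have hleft' : A * Pᵀ * M = A := hG.mul_mul_transpose_mul_mul_eq_self A hPt
    simpa only [transpose_mul, transpose_transpose, hMt, Matrix.mul_assoc] using
      congrArg (·ᵀ) hleft'
  have hcont : Continuous fun X : Matrix m m ℝ => A * P * X * (P * Aᵀ) := by fun_prop
  convert (hcont.tendsto M).comp hM.tendsto_mul_inv_smul_one_add_mul using 2 with ε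
  · calc A * (ε • 1 + M)⁻¹ * Aᵀ = A * P * M * (ε • 1 + M)⁻¹ * (M * P * Aᵀ) := by
          rw [hleft, hright]
      _ = _ := by simp only [Function.comp_apply, Matrix.mul_assoc]
  · rw [hleft, Matrix.mul_assoc]

theorem tendsto_transpose_mul_inv_smul_mul_transpose_add_mul {p : Type*} [Fintype n]
    [DecidableEq n] [Fintype m] [DecidableEq m] {S : Matrix n n ℝ} (hS : S.PosDef)
    (H : Matrix n p ℝ) (A : Matrix n m ℝ) {P : Matrix m m ℝ}
    (hP : Aᵀ * S⁻¹ * A * P * (Aᵀ * S⁻¹ * A) = Aᵀ * S⁻¹ * A) :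
    Tendsto (fun t : ℝ => Hᵀ * (t • (A * Aᵀ) + S)⁻¹ * H) atTop
      (𝓝 (Hᵀ * S⁻¹ * H - Hᵀ * S⁻¹ * A * P * Aᵀ * S⁻¹ * H)) := by
  have hG : S⁻¹.PosDef := hS.inv
  have hM := hG.posSemidef.transpose_mul_mul_same A
  have hwoodbury : ∀ᶠ t : ℝ in atTop,
      Hᵀ * S⁻¹ * H - Hᵀ * S⁻¹ * (A * (t⁻¹ • 1 + Aᵀ * S⁻¹ * A)⁻¹ * Aᵀ) * S⁻¹ * H
        = Hᵀ * (t • (A * Aᵀ) + S)⁻¹ * H := by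
    filter_upwards [eventually_gt_atTop 0] with t ht
    have hunit := ((PosDef.one.smul (inv_pos.mpr ht)).add_posSemidef hM).isUnit
    rw [inv_smul_mul_add_eq_sub hS.isUnit A Aᵀ ht.ne' hunit]
    simp only [Matrix.mul_sub, Matrix.sub_mul, Matrix.mul_assoc]
  have hcont : Continuous fun X : Matrix n n ℝ => Hᵀ * S⁻¹ * H - Hᵀ * S⁻¹ * X * S⁻¹ * H := by
    fun_prop
  have hlim := (hcont.tendsto _).comp
    ((hG.tendsto_mul_inv_smul_one_add_mul_transpose A hP).comp tendsto_inv_atTop_nhdsGT_zero)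
  simpa only [Matrix.mul_assoc] using hlim.congr' hwoodbury

end PosDef

end Matrix

lemma isMoorePenrose_inv {a : ℕ} {A : Matrix (Fin a) (Fin a) ℝ} (hA : IsUnit A) :
    IsMoorePenrose A A⁻¹ := by
  have hdet := (isUnit_iff_isUnit_det A).mp hA
  refine ⟨?_, ?_, ?_, ?_⟩
  · rw [mul_nonsing_inv A hdet, Matrix.one_mul]
  · rw [nonsing_inv_mul A hdet, Matrix.one_mul]
  · rw [mul_nonsing_inv A hdet, transpose_one]
  · rw [nonsing_inv_mul A hdet, transpose_one]

/-- As `t → ∞`, `I(t) = Hᵀ (t·HF HFᵀ + SN)⁻¹ H` converges to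
`Hᵀ SN⁻¹ H - Hᵀ SN⁻¹ HF (HFᵀ SN⁻¹ HF)⁺ HFᵀ SN⁻¹ H`, and if `HF` has full column
rank the pseudoinverse is the ordinary inverse. -/
theorem stmt2 (n p m : ℕ) (SN : Matrix (Fin n) (Fin n) ℝ) (H : Matrix (Fin n) (Fin p) ℝ)
    (HF : Matrix (Fin n) (Fin m) ℝ) (hN : SN.PosDef) :
    (∀ P : Matrix (Fin m) (Fin m) ℝ, IsMoorePenrose (HFᵀ * SN⁻¹ * HF) P →
      Tendsto (fun t : ℝ => Hᵀ * (t • (HF * HFᵀ) + SN)⁻¹ * H) atTop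
        (𝓝 (Hᵀ * SN⁻¹ * H - Hᵀ * SN⁻¹ * HF * P * HFᵀ * SN⁻¹ * H))) ∧
    (HF.rank = m →
      Tendsto (fun t : ℝ => Hᵀ * (t • (HF * HFᵀ) + SN)⁻¹ * H) atTop
        (𝓝 (Hᵀ * SN⁻¹ * H - Hᵀ * SN⁻¹ * HF * (HFᵀ * SN⁻¹ * HF)⁻¹ * HFᵀ * SN⁻¹ * H))) := by
  have hlimit : ∀ P, IsMoorePenrose (HFᵀ * SN⁻¹ * HF) P → _ := fun P hP =>
    hN.tendsto_transpose_mul_inv_smul_mul_transpose_add_mul H HF hP.1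
  refine ⟨hlimit, fun hrank => hlimit _ (isMoorePenrose_inv ?_)⟩
  have hinj : Function.Injective HF.mulVec :=
    mulVec_injective_of_rank_eq_card (by rwa [Fintype.card_fin])
  simpa [conjTranspose_eq_transpose_of_trivial] using
    (hN.inv.conjTranspose_mul_mul_same hinj).isUnit
end

section
/- Let X and Y be random vectors in R^n on the same probability space with E[‖X‖²] < ∞ and E[‖Y‖²] < ∞, and suppose Z ∈ R^{n×n} is a symmetric matrix with E[(X-Y)(X-Y)ᵀ] ⪰ Z (Loewner order). Then for any m×n matrix C and any m×m symmetric positive definite matrix Σ, E[(C(X-Y))ᵀ Σ⁻¹ (C(X-Y))] ≥ tr(Cᵀ Σ⁻¹ C Z). -/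
/-!
Writing `v = X - Y`, the statistic is the quadratic form `vᵀ A v` with `A = Cᵀ Σ⁻¹ C ⪰ 0`, whose
expectation is `tr (A E[v vᵀ])`. Since `E[v vᵀ] - Z ⪰ 0` and the trace of a product of two
positive semidefinite matrices is nonnegative, `tr (A Z) ≤ tr (A E[v vᵀ])`.
-/

open Matrix MeasureTheory

namespace Matrix

theorem mulVec_dotProduct_mulVec_mulVec {m n R : Type*} [Fintype m] [Fintype n]
    [CommSemiring R] (C : Matrix m n R) (S : Matrix m m R) (v : n → R) :
    C *ᵥ v ⬝ᵥ S *ᵥ (C *ᵥ v) = v ⬝ᵥ (Cᵀ * S * C) *ᵥ v := by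
  rw [← mulVec_mulVec, ← mulVec_mulVec, dotProduct_mulVec v, vecMul_transpose]

theorem dotProduct_mulVec_eq_sum_sum {n R : Type*} [Fintype n] [CommSemiring R]
    (A : Matrix n n R) (v : n → R) : v ⬝ᵥ A *ᵥ v = ∑ i, ∑ j, A i j * (v j * v i) := by
  simp only [dotProduct, mulVec, Finset.mul_sum]
  exact Finset.sum_congr rfl fun i _ => Finset.sum_congr rfl fun j _ => by ring

section TraceMul

variable {n 𝕜 : Type*} [Fintype n] [RCLike 𝕜]
open scoped ComplexOrder MatrixOrder

theorem PosSemidef.trace_mul_nonneg {A B : Matrix n n 𝕜} (hA : A.PosSemidef)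
    (hB : B.PosSemidef) : 0 ≤ (A * B).trace := by
  classical
  obtain ⟨y, rfl⟩ := CStarAlgebra.nonneg_iff_eq_star_mul_self.mp hB.nonneg
  rw [star_eq_conjTranspose, ← mul_assoc, trace_mul_cycle]
  exact (hA.mul_mul_conjTranspose_same y).trace_nonneg

theorem PosSemidef.trace_mul_le_trace_mul {A B Z : Matrix n n 𝕜} (hA : A.PosSemidef)
    (hBZ : (B - Z).PosSemidef) : (A * Z).trace ≤ (A * B).trace := by
  have := hA.trace_mul_nonneg hBZ
  rwa [mul_sub, trace_sub, sub_nonneg] at this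

end TraceMul

end Matrix

section SecondMoment

variable {Ω ι : Type*} [MeasurableSpace Ω] {μ : Measure Ω} [Fintype ι]

noncomputable def secondMoment (μ : Measure Ω) (v : Ω → ι → ℝ) : Matrix ι ι ℝ :=
  of fun i j => ∫ ω, v ω i * v ω j ∂μ

theorem integral_dotProduct_mulVec {v : Ω → ι → ℝ} (hv : ∀ i, MemLp (fun ω => v ω i) 2 μ)
    (A : Matrix ι ι ℝ) :
    ∫ ω, v ω ⬝ᵥ A *ᵥ v ω ∂μ = (A * secondMoment μ v).trace := by
  have hint (i j : ι) : Integrable (fun ω => A i j * (v ω j * v ω i)) μ :=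
    ((hv j).integrable_mul (hv i)).const_mul _
  simp_rw [dotProduct_mulVec_eq_sum_sum]
  rw [integral_finsetSum _ fun i _ => integrable_finsetSum _ fun j _ => hint i j]
  refine Finset.sum_congr rfl fun i _ => ?_
  rw [integral_finsetSum _ fun j _ => hint i j]
  simp only [integral_const_mul]
  rfl

end SecondMoment

theorem stmt5_general (n m : ℕ) (Ω : Type*) [MeasureSpace Ω]
    (X Y : Ω → Fin n → ℝ)
    (hX : ∀ i, MemLp (fun ω => X ω i) 2) (hY : ∀ i, MemLp (fun ω => Y ω i) 2)
    (Z : Matrix (Fin n) (Fin n) ℝ)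
    (hZ : ((Matrix.of fun i j => ∫ ω, (X ω i - Y ω i) * (X ω j - Y ω j)) - Z).PosSemidef)
    (C : Matrix (Fin m) (Fin n) ℝ) (S : Matrix (Fin m) (Fin m) ℝ) (hS : S.PosDef) :
    (Cᵀ * S⁻¹ * C * Z).trace ≤
      ∫ ω, C.mulVec (X ω - Y ω) ⬝ᵥ S⁻¹.mulVec (C.mulVec (X ω - Y ω)) := by
  have hXY (i : Fin n) : MemLp (fun ω => (X ω - Y ω) i) 2 := (hX i).sub (hY i)
  have hA : (Cᵀ * S⁻¹ * C).PosSemidef := by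
    simpa only [conjTranspose_eq_transpose_of_trivial] using
      hS.inv.posSemidef.conjTranspose_mul_mul_same C
  simp_rw [mulVec_dotProduct_mulVec_mulVec, integral_dotProduct_mulVec hXY]
  exact hA.trace_mul_le_trace_mul hZ

/-- Detection-statistic lower bound: if `Z` is a symmetric lower bound (in the Loewner order)
on the second-moment matrix `E[(X-Y)(X-Y)ᵀ]`, then for any `C` and `S ≻ 0`,
`E[(C(X-Y))ᵀ S⁻¹ (C(X-Y))] ≥ tr(Cᵀ S⁻¹ C Z)`. -/
theorem stmt5 (n m : ℕ) (Ω : Type*) [MeasureSpace Ω] [IsProbabilityMeasure (volume : Measure Ω)]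
    (X Y : Ω → Fin n → ℝ)
    (hX : ∀ i, MemLp (fun ω => X ω i) 2) (hY : ∀ i, MemLp (fun ω => Y ω i) 2)
    (Z : Matrix (Fin n) (Fin n) ℝ) (hZsymm : Z.IsSymm)
    (hZ : ((Matrix.of fun i j => ∫ ω, (X ω i - Y ω i) * (X ω j - Y ω j)) - Z).PosSemidef)
    (C : Matrix (Fin m) (Fin n) ℝ) (S : Matrix (Fin m) (Fin m) ℝ) (hS : S.PosDef) :
    (Cᵀ * S⁻¹ * C * Z).trace ≤
      ∫ ω, C.mulVec (X ω - Y ω) ⬝ᵥ S⁻¹.mulVec (C.mulVec (X ω - Y ω)) :=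
  stmt5_general n m Ω X Y hX hY Z hZ C S hS
end
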